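/- Let R be a left-symmetric conformal algebra, Q a ℂ[∂]-module, and E = R ⊕ Q the direct sum of ℂ[∂]-modules. Suppose E carries a left-symmetric conformal algebra structure whose restriction to R coincides with the λ-product of R, and such that R is a two-sided ideal of E (i.e. a_λ e ∈ R[λ] and e_λ a ∈ R[λ] for all a ∈ R and e ∈ E). Then there exists a left-symmetric conformal extending structure Ω(R,Q) = (φ, ψ, g_λ(·,·), ∘_λ) of R by Q with l and r trivial, and an isomorphism of left-symmetric conformal algebras from E to the crossed product R♮^g_{φ,ψ}Q which stabilizes R and co-stabilizes Q. -/

import Mathlib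

open Finsupp Polynomial

noncomputable section

/-- One-variable conformal polynomials in λ with coefficients in `W`:
the coefficient of `λ^n` sits at index `n`. -/
abbrev OP (W : Type*) [Zero W] := ℕ →₀ W

/-- Two-variable conformal polynomials in λ, μ with coefficients in `W`. -/
abbrev TP (W : Type*) [Zero W] := (ℕ × ℕ) →₀ W

section Defs

variable {U V W L : Type*}
variable [AddCommGroup U] [Module ℂ U] [AddCommGroup V] [Module ℂ V]
variable [AddCommGroup W] [Module ℂ W] [AddCommGroup L] [Module ℂ L]

/-- Multiplication by the variable λ on one-variable polynomials. -/
def lsh : OP W →ₗ[ℂ] OP W := Finsupp.lmapDomain W ℂ (· + 1)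

/-- Multiplication by λ on two-variable polynomials. -/
def LX : TP W →ₗ[ℂ] TP W := Finsupp.lmapDomain W ℂ (fun p => (p.1 + 1, p.2))

/-- Multiplication by μ on two-variable polynomials. -/
def LY : TP W →ₗ[ℂ] TP W := Finsupp.lmapDomain W ℂ (fun p => (p.1, p.2 + 1))

/-- Coefficientwise action of ∂ on one-variable polynomials. -/
def pD (dW : W →ₗ[ℂ] W) : OP W →ₗ[ℂ] OP W := Finsupp.mapRange.linearMap dW

/-- Coefficientwise action of ∂ on two-variable polynomials. -/
def PD (dW : W →ₗ[ℂ] W) : TP W →ₗ[ℂ] TP W := Finsupp.mapRange.linearMap dW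

/-- The operator −λ−∂ on one-variable polynomials. -/
def nD (dW : W →ₗ[ℂ] W) : OP W →ₗ[ℂ] OP W := -lsh - pD dW

/-- The operator −λ−∂ on two-variable polynomials. -/
def nX (dW : W →ₗ[ℂ] W) : TP W →ₗ[ℂ] TP W := -LX - PD dW

/-- The operator −μ−∂ on two-variable polynomials. -/
def nY (dW : W →ₗ[ℂ] W) : TP W →ₗ[ℂ] TP W := -LY - PD dW

/-- The operator −λ−μ−∂ on two-variable polynomials. -/
def nXY (dW : W →ₗ[ℂ] W) : TP W →ₗ[ℂ] TP W := -LX - LY - PD dW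

/-- Substitution of a (commuting) operator `A` for the variable of a one-variable
polynomial, with values in two-variable polynomials. -/
def evA (A : TP W →ₗ[ℂ] TP W) : OP W →ₗ[ℂ] TP W :=
  Finsupp.lsum ℂ (fun k => (A ^ k) ∘ₗ Finsupp.lsingle ((0, 0) : ℕ × ℕ))

/-- Substitution of an operator `A` for the variable of a one-variable polynomial. -/
def evA1 (A : OP W →ₗ[ℂ] OP W) : OP W →ₗ[ℂ] OP W :=
  Finsupp.lsum ℂ (fun k => (A ^ k) ∘ₗ Finsupp.lsingle (0 : ℕ))

/-- `u_A v`: the pairing `m` evaluated with the variable replaced by the operator `A`. -/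
def ev2 (m : U →ₗ[ℂ] V →ₗ[ℂ] OP W) (A : TP W →ₗ[ℂ] TP W) (u : U) (v : V) : TP W :=
  evA A (m u v)

/-- Extension of the pairing `m`, in its first argument, to two-variable polynomials. -/
def exL (m : U →ₗ[ℂ] V →ₗ[ℂ] OP W) (A : TP W →ₗ[ℂ] TP W) (p : TP U) (v : V) : TP W :=
  Finsupp.sum p fun ij u => (LX ^ ij.1) ((LY ^ ij.2) (evA A (m u v)))

/-- Extension of the pairing `m`, in its second argument, to two-variable polynomials. -/
def exR (m : U →ₗ[ℂ] V →ₗ[ℂ] OP W) (A : TP W →ₗ[ℂ] TP W) (u : U) (p : TP V) : TP W :=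
  Finsupp.sum p fun ij v => (LX ^ ij.1) ((LY ^ ij.2) (evA A (m u v)))

/-- Extension of a unary conformal-linear map to two-variable polynomials. -/
def exU (D : U →ₗ[ℂ] OP W) (A : TP W →ₗ[ℂ] TP W) (p : TP U) : TP W :=
  Finsupp.sum p fun ij u => (LX ^ ij.1) ((LY ^ ij.2) (evA A (D u)))

/-- Coefficientwise application of a linear map to a one-variable polynomial. -/
def pMap (f : U →ₗ[ℂ] W) : OP U →ₗ[ℂ] OP W := Finsupp.mapRange.linearMap f

/-- A conformal bilinear map: `f(∂u, v) = −λ f(u,v)` and `f(u, ∂v) = (λ+∂) f(u,v)`. -/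
structure ConfBilin (dU : U →ₗ[ℂ] U) (dV : V →ₗ[ℂ] V) (dW : W →ₗ[ℂ] W)
    (m : U →ₗ[ℂ] V →ₗ[ℂ] OP W) : Prop where
  dleft : ∀ u v, m (dU u) v = -lsh (m u v)
  dright : ∀ u v, m u (dV v) = lsh (m u v) + pD dW (m u v)

/-- A left-symmetric conformal algebra structure on the ℂ[∂]-module `(L, dL)`. -/
structure IsLSCA (dL : L →ₗ[ℂ] L) (m : L →ₗ[ℂ] L →ₗ[ℂ] OP L) : Prop where
  conf : ConfBilin dL dL dL m
  lsym : ∀ a b c : L,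
    exL m (LX + LY) (ev2 m LX a b) c - exR m LX a (ev2 m LY b c)
      = exL m (LX + LY) (ev2 m LY b a) c - exR m LY b (ev2 m LX a c)

/-- The commutator λ-bracket `[u_λ v] = u_λ v − v_{−λ−∂} u`. -/
def commut (dL : L →ₗ[ℂ] L) (m : L →ₗ[ℂ] L →ₗ[ℂ] OP L) : L →ₗ[ℂ] L →ₗ[ℂ] OP L :=
  m - (m.compr₂ (evA1 (nD dL))).flip

/-- A Lie conformal algebra structure on the ℂ[∂]-module `(L, dL)`. -/
structure IsLieCA (dL : L →ₗ[ℂ] L) (br : L →ₗ[ℂ] L →ₗ[ℂ] OP L) : Prop where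
  dleft : ∀ u v, br (dL u) v = -lsh (br u v)
  dright : ∀ u v, br u (dL v) = lsh (br u v) + pD dL (br u v)
  skew : ∀ u v, br u v = -evA1 (nD dL) (br v u)
  jacobi : ∀ a b c : L,
    exR br LX a (ev2 br LY b c)
      = exL br (LX + LY) (ev2 br LX a b) c + exR br LY b (ev2 br LX a c)

end Defs

section Ext

variable {R Q : Type*} [AddCommGroup R] [Module ℂ R] [AddCommGroup Q] [Module ℂ Q]

/-- An extending datum of a left-symmetric conformal algebra `R` by a ℂ[∂]-module `Q`. -/
structure ExtDatum (dR : R →ₗ[ℂ] R) (dQ : Q →ₗ[ℂ] Q) where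
  phi : Q →ₗ[ℂ] R →ₗ[ℂ] OP R
  psi : Q →ₗ[ℂ] R →ₗ[ℂ] OP R
  l : R →ₗ[ℂ] Q →ₗ[ℂ] OP Q
  r : R →ₗ[ℂ] Q →ₗ[ℂ] OP Q
  g : Q →ₗ[ℂ] Q →ₗ[ℂ] OP R
  o : Q →ₗ[ℂ] Q →ₗ[ℂ] OP Q
  hphi : ConfBilin dQ dR dR phi
  hpsi : ConfBilin dQ dR dR psi
  hl : ConfBilin dR dQ dQ l
  hr : ConfBilin dR dQ dQ r
  hg : ConfBilin dQ dQ dR g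
  ho : ConfBilin dQ dQ dQ o

/-- Embedding of `R`-valued polynomials into `(R ⊕ Q)`-valued polynomials. -/
def inlP (R Q : Type*) [AddCommGroup R] [Module ℂ R] [AddCommGroup Q] [Module ℂ Q] :
    OP R →ₗ[ℂ] OP (R × Q) := Finsupp.mapRange.linearMap (LinearMap.inl ℂ R Q)

/-- Embedding of `Q`-valued polynomials into `(R ⊕ Q)`-valued polynomials. -/
def inrP (R Q : Type*) [AddCommGroup R] [Module ℂ R] [AddCommGroup Q] [Module ℂ Q] :
    OP Q →ₗ[ℂ] OP (R × Q) := Finsupp.mapRange.linearMap (LinearMap.inr ℂ R Q)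

/-- The λ-product of the unified product `R ♮ Q`:
`(a+x) _λ (b+y) = (a_λ b + φ(x)_λ b + ψ(y)_{−λ−∂} a + g_λ(x,y)) + (x∘_λ y + l(a)_λ y + r(b)_{−λ−∂} x)`. -/
def uprod (dR : R →ₗ[ℂ] R) (dQ : Q →ₗ[ℂ] Q) (Ω : ExtDatum dR dQ)
    (m : R →ₗ[ℂ] R →ₗ[ℂ] OP R) :
    (R × Q) →ₗ[ℂ] (R × Q) →ₗ[ℂ] OP (R × Q) :=
  ((m.compl₁₂ (LinearMap.fst ℂ R Q) (LinearMap.fst ℂ R Q)).compr₂ (inlP R Q))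
    + ((Ω.phi.compl₁₂ (LinearMap.snd ℂ R Q) (LinearMap.fst ℂ R Q)).compr₂ (inlP R Q))
    + (((Ω.psi.compl₁₂ (LinearMap.snd ℂ R Q) (LinearMap.fst ℂ R Q)).compr₂
        (inlP R Q ∘ₗ evA1 (nD dR))).flip)
    + ((Ω.g.compl₁₂ (LinearMap.snd ℂ R Q) (LinearMap.snd ℂ R Q)).compr₂ (inlP R Q))
    + ((Ω.o.compl₁₂ (LinearMap.snd ℂ R Q) (LinearMap.snd ℂ R Q)).compr₂ (inrP R Q))
    + ((Ω.l.compl₁₂ (LinearMap.fst ℂ R Q) (LinearMap.snd ℂ R Q)).compr₂ (inrP R Q))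
    + (((Ω.r.compl₁₂ (LinearMap.fst ℂ R Q) (LinearMap.snd ℂ R Q)).compr₂
        (inrP R Q ∘ₗ evA1 (nD dQ))).flip)

lemma uprod_apply (dR : R →ₗ[ℂ] R) (dQ : Q →ₗ[ℂ] Q) (Ω : ExtDatum dR dQ)
    (m : R →ₗ[ℂ] R →ₗ[ℂ] OP R) (e₁ e₂ : R × Q) :
    uprod dR dQ Ω m e₁ e₂ =
      inlP R Q (m e₁.1 e₂.1 + Ω.phi e₁.2 e₂.1 + evA1 (nD dR) (Ω.psi e₂.2 e₁.1) + Ω.g e₁.2 e₂.2)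
      + inrP R Q (Ω.o e₁.2 e₂.2 + Ω.l e₁.1 e₂.2 + evA1 (nD dQ) (Ω.r e₂.1 e₁.2)) := by
  simp [uprod, LinearMap.add_apply, LinearMap.compr₂_apply, LinearMap.compl₁₂_apply,
    LinearMap.flip_apply, map_add, LinearMap.comp_apply]
  abel

lemma uprod_res (dR : R →ₗ[ℂ] R) (dQ : Q →ₗ[ℂ] Q) (Ω : ExtDatum dR dQ)
    (m : R →ₗ[ℂ] R →ₗ[ℂ] OP R) (a b : R) :
    uprod dR dQ Ω m (a, (0 : Q)) (b, 0) = inlP R Q (m a b) := by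
  rw [uprod_apply]
  simp

/-- Isomorphism property of left-symmetric conformal algebra structures, via
a ℂ[∂]-module automorphism `T` of the underlying module `E`. -/
structure IsIsoLSCA {E : Type*} [AddCommGroup E] [Module ℂ E] (dE : E →ₗ[ℂ] E)
    (m₁ m₂ : E →ₗ[ℂ] E →ₗ[ℂ] OP E) (T : E ≃ₗ[ℂ] E) : Prop where
  dcomm : ∀ e, T (dE e) = dE (T e)
  mult : ∀ u v, m₂ (T u) (T v) = pMap (T : E →ₗ[ℂ] E) (m₁ u v)

/-- `T` stabilizes `R`, i.e. `T ∘ i = i` for the inclusion `i : R → R ⊕ Q`. -/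
def Stab (T : (R × Q) ≃ₗ[ℂ] (R × Q)) : Prop := ∀ a : R, T (a, 0) = (a, 0)

/-- `T` co-stabilizes `Q`, i.e. `π ∘ T = π` for the projection `π : R ⊕ Q → Q`. -/
def Costab (T : (R × Q) ≃ₗ[ℂ] (R × Q)) : Prop := ∀ e, (T e).2 = e.2

end Ext
/-!
Since `R` is an ideal, `a_λ e` and `e_λ a` have no `Q`-component, so the product of `E` is
determined by the four pieces `x_λ b`, `a_λ y` (both in `R`) and `x_λ y` (in `R ⊕ Q`).
Reading `φ`, `g` and `∘` off these components, and `ψ` off `a_λ y` after substituting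
`−λ−∂` for `λ` (an involution), makes the crossed-product λ-product literally equal to that
of `E`, so the identity of `R ⊕ Q` is the required isomorphism.
-/

section Polynomials

variable {U W : Type*} [AddCommGroup U] [Module ℂ U] [AddCommGroup W] [Module ℂ W]

@[simp] lemma lsh_single (k : ℕ) (a : W) :
    lsh (Finsupp.single k a) = Finsupp.single (k + 1) a := by
  simp [lsh]

@[simp] lemma pD_single (d : W →ₗ[ℂ] W) (k : ℕ) (a : W) :
    pD d (Finsupp.single k a) = Finsupp.single k (d a) := by
  simp [pD]

@[simp] lemma pMap_single (f : U →ₗ[ℂ] W) (k : ℕ) (a : U) :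
    pMap f (Finsupp.single k a) = Finsupp.single k (f a) := by
  simp [pMap]

@[simp] lemma evA1_single (A : OP W →ₗ[ℂ] OP W) (k : ℕ) (a : W) :
    evA1 A (Finsupp.single k a) = (A ^ k) (Finsupp.single 0 a) := by
  simp [evA1]

lemma nD_apply (d : W →ₗ[ℂ] W) (p : OP W) : nD d p = -lsh p - pD d p := rfl

lemma pD_lsh (d : W →ₗ[ℂ] W) (p : OP W) : pD d (lsh p) = lsh (pD d p) := by
  induction p using Finsupp.induction_linear with
  | zero => simp
  | add p q hp hq => simp [hp, hq]
  | single k a => simp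

lemma pD_nD_pow (d : W →ₗ[ℂ] W) (k : ℕ) (p : OP W) :
    ((nD d) ^ k) (pD d p) = pD d (((nD d) ^ k) p) := by
  induction k with
  | zero => rfl
  | succ n ih =>
    rw [pow_succ', Module.End.mul_apply, Module.End.mul_apply, ih]
    simp only [nD_apply, map_neg, map_sub, pD_lsh]

lemma evA1_lsh (A : OP W →ₗ[ℂ] OP W) (p : OP W) : evA1 A (lsh p) = A (evA1 A p) := by
  induction p using Finsupp.induction_linear with
  | zero => simp
  | add p q hp hq => simp [hp, hq]
  | single k a => simp [pow_succ', Module.End.mul_apply]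

lemma evA1_nD_pD (d : W →ₗ[ℂ] W) (p : OP W) :
    evA1 (nD d) (pD d p) = pD d (evA1 (nD d) p) := by
  induction p using Finsupp.induction_linear with
  | zero => simp
  | add p q hp hq => simp [hp, hq]
  | single k a =>
    rw [pD_single, evA1_single, evA1_single, ← pD_nD_pow, pD_single]

lemma evA1_nD_lsh (d : W →ₗ[ℂ] W) (p : OP W) :
    evA1 (nD d) (lsh p) = -lsh (evA1 (nD d) p) - pD d (evA1 (nD d) p) := by
  rw [evA1_lsh, nD_apply]

lemma evA1_nD_nD (d : W →ₗ[ℂ] W) (p : OP W) :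
    evA1 (nD d) (nD d p) = lsh (evA1 (nD d) p) := by
  rw [nD_apply, map_sub, map_neg, evA1_nD_lsh, evA1_nD_pD]
  abel

lemma evA1_nD_involutive (d : W →ₗ[ℂ] W) (p : OP W) :
    evA1 (nD d) (evA1 (nD d) p) = p := by
  induction p using Finsupp.induction_linear with
  | zero => simp
  | add p q hp hq => simp [hp, hq]
  | single k a =>
    rw [evA1_single]
    induction k with
    | zero => simp
    | succ n ih => rw [pow_succ', Module.End.mul_apply, evA1_nD_nD, ih, lsh_single]

lemma pMap_lsh (f : U →ₗ[ℂ] W) (p : OP U) : pMap f (lsh p) = lsh (pMap f p) := by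
  induction p using Finsupp.induction_linear with
  | zero => simp
  | add p q hp hq => simp [hp, hq]
  | single k a => simp

lemma pMap_pD (f : U →ₗ[ℂ] W) {dU : U →ₗ[ℂ] U} {dW : W →ₗ[ℂ] W}
    (hf : ∀ u, f (dU u) = dW (f u)) (p : OP U) :
    pMap f (pD dU p) = pD dW (pMap f p) := by
  induction p using Finsupp.induction_linear with
  | zero => simp
  | add p q hp hq => simp [hp, hq]
  | single k a => simp [hf]

end Polynomials

namespace ConfBilin

variable {U V W U' V' W' : Type*}
  [AddCommGroup U] [Module ℂ U] [AddCommGroup V] [Module ℂ V] [AddCommGroup W] [Module ℂ W]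
  [AddCommGroup U'] [Module ℂ U'] [AddCommGroup V'] [Module ℂ V']
  [AddCommGroup W'] [Module ℂ W']
  {dU : U →ₗ[ℂ] U} {dV : V →ₗ[ℂ] V} {dW : W →ₗ[ℂ] W}
  {m : U →ₗ[ℂ] V →ₗ[ℂ] OP W}

lemma compl₁₂_compr₂ (hm : ConfBilin dU dV dW m)
    {dU' : U' →ₗ[ℂ] U'} {dV' : V' →ₗ[ℂ] V'} {dW' : W' →ₗ[ℂ] W'}
    (f : U' →ₗ[ℂ] U) (g : V' →ₗ[ℂ] V) (h : W →ₗ[ℂ] W')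
    (hf : ∀ u, f (dU' u) = dU (f u)) (hg : ∀ v, g (dV' v) = dV (g v))
    (hh : ∀ w, h (dW w) = dW' (h w)) :
    ConfBilin dU' dV' dW' ((m.compl₁₂ f g).compr₂ (pMap h)) where
  dleft u v := by
    simp only [LinearMap.compr₂_apply, LinearMap.compl₁₂_apply]
    rw [hf, hm.dleft, map_neg, pMap_lsh]
  dright u v := by
    simp only [LinearMap.compr₂_apply, LinearMap.compl₁₂_apply]
    rw [hg, hm.dright, map_add, pMap_lsh, pMap_pD h hh]

lemma flip_evA1_nD (hm : ConfBilin dU dV dW m) :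
    ConfBilin dV dU dW (m.compr₂ (evA1 (nD dW))).flip where
  dleft v u := by
    simp only [LinearMap.flip_apply, LinearMap.compr₂_apply]
    rw [hm.dright, map_add, evA1_nD_lsh, evA1_nD_pD]
    abel
  dright v u := by
    simp only [LinearMap.flip_apply, LinearMap.compr₂_apply]
    rw [hm.dleft, map_neg, evA1_nD_lsh]
    abel

lemma zero : ConfBilin dU dV dW (0 : U →ₗ[ℂ] V →ₗ[ℂ] OP W) where
  dleft u v := by simp
  dright u v := by simp

end ConfBilin

section CrossedProduct

variable {R Q : Type*} [AddCommGroup R] [Module ℂ R] [AddCommGroup Q] [Module ℂ Q]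

lemma inlP_fst_add_inrP_snd (p : OP (R × Q)) :
    inlP R Q (pMap (LinearMap.fst ℂ R Q) p) + inrP R Q (pMap (LinearMap.snd ℂ R Q) p) = p := by
  ext n : 1
  simp [inlP, inrP, pMap]

lemma eq_inlP_of_pMap_snd_eq_zero {p : OP (R × Q)} (h : pMap (LinearMap.snd ℂ R Q) p = 0) :
    p = inlP R Q (pMap (LinearMap.fst ℂ R Q) p) := by
  conv_lhs => rw [← inlP_fst_add_inrP_snd p, h, map_zero, add_zero]

variable {dR : R →ₗ[ℂ] R} {dQ : Q →ₗ[ℂ] Q}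

def crossedDatum {mE : (R × Q) →ₗ[ℂ] (R × Q) →ₗ[ℂ] OP (R × Q)}
    (hmE : ConfBilin (dR.prodMap dQ) (dR.prodMap dQ) (dR.prodMap dQ) mE) :
    ExtDatum dR dQ where
  phi := (mE.compl₁₂ (LinearMap.inr ℂ R Q) (LinearMap.inl ℂ R Q)).compr₂
    (pMap (LinearMap.fst ℂ R Q))
  psi := (((mE.compl₁₂ (LinearMap.inl ℂ R Q) (LinearMap.inr ℂ R Q)).compr₂
    (pMap (LinearMap.fst ℂ R Q))).compr₂ (evA1 (nD dR))).flip
  l := 0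
  r := 0
  g := (mE.compl₁₂ (LinearMap.inr ℂ R Q) (LinearMap.inr ℂ R Q)).compr₂
    (pMap (LinearMap.fst ℂ R Q))
  o := (mE.compl₁₂ (LinearMap.inr ℂ R Q) (LinearMap.inr ℂ R Q)).compr₂
    (pMap (LinearMap.snd ℂ R Q))
  hphi := hmE.compl₁₂_compr₂ _ _ _ (fun _ => by simp) (fun _ => by simp) (fun _ => rfl)
  hpsi := (hmE.compl₁₂_compr₂ (LinearMap.inl ℂ R Q) (LinearMap.inr ℂ R Q)
    (LinearMap.fst ℂ R Q) (fun _ => by simp) (fun _ => by simp) (fun _ => rfl)).flip_evA1_nD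
  hl := ConfBilin.zero
  hr := ConfBilin.zero
  hg := hmE.compl₁₂_compr₂ _ _ _ (fun _ => by simp) (fun _ => by simp) (fun _ => rfl)
  ho := hmE.compl₁₂_compr₂ _ _ _ (fun _ => by simp) (fun _ => by simp) (fun _ => rfl)

lemma uprod_crossedDatum {m : R →ₗ[ℂ] R →ₗ[ℂ] OP R}
    {mE : (R × Q) →ₗ[ℂ] (R × Q) →ₗ[ℂ] OP (R × Q)}
    (hmE : ConfBilin (dR.prodMap dQ) (dR.prodMap dQ) (dR.prodMap dQ) mE)
    (hsub : ∀ a b : R, mE (a, 0) (b, 0) = inlP R Q (m a b))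
    (hidl : ∀ (a : R) (e : R × Q), pMap (LinearMap.snd ℂ R Q) (mE (a, 0) e) = 0)
    (hidr : ∀ (a : R) (e : R × Q), pMap (LinearMap.snd ℂ R Q) (mE e (a, 0)) = 0) :
    uprod dR dQ (crossedDatum hmE) m = mE := by
  refine LinearMap.ext fun ⟨a, x⟩ => LinearMap.ext fun ⟨b, y⟩ => ?_
  have hsplit : ∀ (c : R) (z : Q), ((c, z) : R × Q) = (c, 0) + (0, z) := fun c z => by simp
  rw [uprod_apply]
  conv_rhs => rw [hsplit a x, hsplit b y]
  simp only [crossedDatum, LinearMap.compr₂_apply, LinearMap.compl₁₂_apply,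
    LinearMap.flip_apply, LinearMap.inr_apply, LinearMap.inl_apply, LinearMap.zero_apply,
    map_zero, add_zero, evA1_nD_involutive, map_add, LinearMap.add_apply]
  conv_rhs => rw [hsub, ← inlP_fst_add_inrP_snd (mE (0, x) (0, y)),
    eq_inlP_of_pMap_snd_eq_zero (hidr b (0, x)), eq_inlP_of_pMap_snd_eq_zero (hidl a (0, y))]
  abel

end CrossedProduct

lemma isIsoLSCA_refl {E : Type*} [AddCommGroup E] [Module ℂ E] (dE : E →ₗ[ℂ] E)
    (mE : E →ₗ[ℂ] E →ₗ[ℂ] OP E) : IsIsoLSCA dE mE mE (LinearEquiv.refl ℂ E) where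
  dcomm _ := rfl
  mult u v := by
    ext n : 1
    simp [pMap]

theorem E_iso_crossed_product_general
    {R Q : Type*} [AddCommGroup R] [Module ℂ R] [AddCommGroup Q] [Module ℂ Q]
    (dR : R →ₗ[ℂ] R) (dQ : Q →ₗ[ℂ] Q)
    (m : R →ₗ[ℂ] R →ₗ[ℂ] OP R)
    (mE : (R × Q) →ₗ[ℂ] (R × Q) →ₗ[ℂ] OP (R × Q))
    (hE : IsLSCA (dR.prodMap dQ) mE)
    (hsub : ∀ a b : R, mE (a, 0) (b, 0) = inlP R Q (m a b))
    -- `R` is a two-sided ideal: the `Q`-components of `a_λ e` and of `e_λ a` vanish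
    (hidl : ∀ (a : R) (e : R × Q),
      Finsupp.mapRange.linearMap (LinearMap.snd ℂ R Q) (mE (a, 0) e) = 0)
    (hidr : ∀ (a : R) (e : R × Q),
      Finsupp.mapRange.linearMap (LinearMap.snd ℂ R Q) (mE e (a, 0)) = 0) :
    ∃ Ω : ExtDatum dR dQ, Ω.l = 0 ∧ Ω.r = 0 ∧
      IsLSCA (dR.prodMap dQ) (uprod dR dQ Ω m) ∧
      ∃ T : (R × Q) ≃ₗ[ℂ] (R × Q),
        IsIsoLSCA (dR.prodMap dQ) mE (uprod dR dQ Ω m) T ∧ Stab T ∧ Costab T := by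
  have huprod : uprod dR dQ (crossedDatum hE.conf) m = mE :=
    uprod_crossedDatum hE.conf hsub hidl hidr
  refine ⟨crossedDatum hE.conf, rfl, rfl, ?_, LinearEquiv.refl ℂ (R × Q), ?_,
    fun _ => rfl, fun _ => rfl⟩ <;> rw [huprod]
  · exact hE
  · exact isIsoLSCA_refl _ mE

/-- **Proposition 5.1.**  Let `R` and `Q` be two left-symmetric conformal algebras and
`E = R ⊕ Q`.  If `E` carries a left-symmetric conformal algebra structure restricting to
that of `R` and such that `R` is a (two-sided) ideal of `E`, then `E` is isomorphic to a
crossed product `R ♮^g_{φ,ψ} Q` (a unified product with `l` and `r` trivial), by an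
isomorphism which stabilizes `R` and co-stabilizes `Q`. -/
theorem E_iso_crossed_product
    {R Q : Type*} [AddCommGroup R] [Module ℂ R] [AddCommGroup Q] [Module ℂ Q]
    (dR : R →ₗ[ℂ] R) (dQ : Q →ₗ[ℂ] Q)
    (m : R →ₗ[ℂ] R →ₗ[ℂ] OP R) (hm : IsLSCA dR m)
    (mE : (R × Q) →ₗ[ℂ] (R × Q) →ₗ[ℂ] OP (R × Q))
    (hE : IsLSCA (dR.prodMap dQ) mE)
    (hsub : ∀ a b : R, mE (a, 0) (b, 0) = inlP R Q (m a b))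
    -- `R` is a two-sided ideal: the `Q`-components of `a_λ e` and of `e_λ a` vanish
    (hidl : ∀ (a : R) (e : R × Q),
      Finsupp.mapRange.linearMap (LinearMap.snd ℂ R Q) (mE (a, 0) e) = 0)
    (hidr : ∀ (a : R) (e : R × Q),
      Finsupp.mapRange.linearMap (LinearMap.snd ℂ R Q) (mE e (a, 0)) = 0) :
    ∃ Ω : ExtDatum dR dQ, Ω.l = 0 ∧ Ω.r = 0 ∧
      IsLSCA (dR.prodMap dQ) (uprod dR dQ Ω m) ∧
      ∃ T : (R × Q) ≃ₗ[ℂ] (R × Q),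
        IsIsoLSCA (dR.prodMap dQ) mE (uprod dR dQ Ω m) T ∧ Stab T ∧ Costab T :=
  E_iso_crossed_product_general dR dQ m mE hE hsub hidl hidr
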